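/- Let α > 0, β > 0, t > 0, a ∈ ℝ, and x ∈ ℝ with x ≠ 0. Then the change of variables u = 1/(r−t) yields the identity ∫_t^∞ r^{α−1} (r−t)^{−a} · √(r/(r−t)) · exp( −r x²/(2t(r−t)) − β r ) dr = exp( −x²/(2t) − β t ) · ∫_0^∞ (1+tu)^{α−1/2} · u^{a−α−1} · exp( −x² u/2 − β/u ) du, both integrals being finite. -/

import Mathlib

/-!
The substitution `r = t + u⁻¹` maps `(0, ∞)` onto `(t, ∞)` with Jacobian `u⁻²`, and turns the
integrand in `r` into `exp (-x² / (2t) - βt)` times the kernel `(1 + tu)^p u^q exp (-x²u/2 - β/u)`.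
That kernel is integrable on `(0, ∞)` for all exponents `p, q`: `exp (-β/u)` beats every power
of `u` as `u → 0⁺`, and `exp (-x²u/2)` beats every power as `u → ∞`.
-/

open MeasureTheory Set Real Filter Topology Asymptotics

theorem integrableOn_Ioi_of_tendsto_nhdsGT_of_isBigO_exp {E : Type*} [NormedAddCommGroup E]
    {f : ℝ → E} {a b : ℝ} {c : E} (hb : 0 < b) (hf : ContinuousOn f (Ioi a))
    (hlim : Tendsto f (𝓝[>] a) (𝓝 c)) (hexp : f =O[atTop] fun u => exp (-b * u)) :
    IntegrableOn f (Ioi a) :=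
  integrableOn_Ioi_iff_integrableAtFilter_atTop_nhdsWithin.mpr
    ⟨hexp.integrableAtFilter ⟨Ioi a, Ioi_mem_atTop a, hf.aestronglyMeasurable measurableSet_Ioi⟩
        ⟨Ioi 0, Ioi_mem_atTop 0, exp_neg_integrableOn_Ioi 0 hb⟩,
      hlim.integrableAtFilter (hf.stronglyMeasurableAtFilter_nhdsWithin measurableSet_Ioi a)
        (volume.finiteAt_nhdsWithin a _),
      hf.locallyIntegrableOn measurableSet_Ioi⟩

theorem tendsto_rpow_mul_exp_neg_div_nhdsGT_zero (s : ℝ) {b : ℝ} (hb : 0 < b) :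
    Tendsto (fun u : ℝ => u ^ s * exp (-b / u)) (𝓝[>] 0) (𝓝 0) := by
  refine ((tendsto_rpow_mul_exp_neg_mul_atTop_nhds_zero (-s) b hb).comp
    tendsto_inv_nhdsGT_zero).congr' ?_
  filter_upwards [self_mem_nhdsWithin] with u (hu : 0 < u)
  simp [inv_rpow hu.le, rpow_neg hu.le, div_eq_mul_inv]

section SubstitutionConstAddInv

variable {E : Type*} [NormedAddCommGroup E] [NormedSpace ℝ E]

theorem image_const_add_inv_Ioi_zero (t : ℝ) : (fun u : ℝ => t + u⁻¹) '' Ioi 0 = Ioi t := by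
  ext r
  refine ⟨?_, fun (hr : t < r) => ⟨(r - t)⁻¹, inv_pos.mpr (sub_pos.mpr hr), by simp⟩⟩
  rintro ⟨u, hu : 0 < u, rfl⟩
  simpa using inv_pos.mpr hu

theorem injOn_const_add_inv (t : ℝ) : InjOn (fun u : ℝ => t + u⁻¹) (Ioi 0) :=
  fun _ _ _ _ h => inv_injective (add_left_cancel h)

theorem hasDerivWithinAt_const_add_inv (t : ℝ) {u : ℝ} (hu : u ∈ Ioi (0 : ℝ)) :
    HasDerivWithinAt (fun u : ℝ => t + u⁻¹) (-(u ^ 2)⁻¹) (Ioi 0) u :=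
  ((hasDerivAt_inv (ne_of_gt hu)).const_add t).hasDerivWithinAt

theorem integrableOn_Ioi_iff_comp_const_add_inv (t : ℝ) (F : ℝ → E) :
    IntegrableOn F (Ioi t) ↔ IntegrableOn (fun u => (u ^ 2)⁻¹ • F (t + u⁻¹)) (Ioi 0) := by
  simpa [image_const_add_inv_Ioi_zero, abs_inv] using
    integrableOn_image_iff_integrableOn_abs_deriv_smul measurableSet_Ioi
      (fun _ => hasDerivWithinAt_const_add_inv t) (injOn_const_add_inv t) F

theorem integral_Ioi_eq_integral_comp_const_add_inv (t : ℝ) (F : ℝ → E) :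
    ∫ r in Ioi t, F r = ∫ u in Ioi 0, (u ^ 2)⁻¹ • F (t + u⁻¹) := by
  simpa [image_const_add_inv_Ioi_zero, abs_inv] using
    integral_image_eq_integral_abs_deriv_smul measurableSet_Ioi
      (fun _ => hasDerivWithinAt_const_add_inv t) (injOn_const_add_inv t) F

end SubstitutionConstAddInv

noncomputable def gammaPriorKernel (t x β p q u : ℝ) : ℝ :=
  (1 + t * u) ^ p * u ^ q * exp (-(x ^ 2 * u) / 2 - β / u)

section GammaPriorKernel

variable {t x β : ℝ} (p q : ℝ)

theorem continuousOn_gammaPriorKernel (ht : 0 ≤ t) :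
    ContinuousOn (gammaPriorKernel t x β p q) (Ioi 0) := by
  intro u (hu : 0 < u)
  apply ContinuousAt.continuousWithinAt
  unfold gammaPriorKernel
  fun_prop (disch := first | exact Or.inl (by positivity) | positivity)

theorem tendsto_gammaPriorKernel_nhdsGT_zero (hβ : 0 < β) :
    Tendsto (gammaPriorKernel t x β p q) (𝓝[>] 0) (𝓝 0) := by
  have hcont : ContinuousAt (fun u : ℝ => (1 + t * u) ^ p * exp (-(x ^ 2 * u) / 2)) 0 := by
    fun_prop (disch := norm_num)
  have := (hcont.tendsto.mono_left nhdsWithin_le_nhds).mul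
    (tendsto_rpow_mul_exp_neg_div_nhdsGT_zero q hβ)
  rw [mul_zero] at this
  refine this.congr fun u => ?_
  simp only [gammaPriorKernel, sub_eq_add_neg, exp_add, neg_div]
  ring

theorem gammaPriorKernel_isBigO_exp_atTop (ht : 0 < t) (hx : x ≠ 0) :
    gammaPriorKernel t x β p q =O[atTop] fun u => exp (-(x ^ 2 / 4) * u) := by
  -- For `u > 0` the kernel is `(t + u⁻¹)^p e^(-β/u) · u^(p+q) e^(-x²u/4) · e^(-x²u/4)`,
  -- and the product of the first two factors tends to `t^p · 0`.
  have hcont : ContinuousAt (fun v : ℝ => (t + v) ^ p * exp (-β * v)) 0 := by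
    fun_prop (disch := simp [ht.ne'])
  have hlim := (hcont.tendsto.comp tendsto_inv_atTop_zero).mul
    (tendsto_rpow_mul_exp_neg_mul_atTop_nhds_zero (p + q) (x ^ 2 / 4) (by positivity))
  rw [mul_zero] at hlim
  refine ((hlim.isBigO_one ℝ).mul (isBigO_refl _ _)).congr' ?_ (.of_forall fun _ => one_mul _)
  filter_upwards [eventually_gt_atTop 0] with u hu
  have hsplit : 1 + t * u = u * (t + u⁻¹) := by field_simp; ring
  have hexp : exp (-(x ^ 2 * u) / 2 - β / u) =
      exp (-β * u⁻¹) * exp (-(x ^ 2 / 4) * u) * exp (-(x ^ 2 / 4) * u) := by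
    rw [← exp_add, ← exp_add]; ring_nf
  simp only [gammaPriorKernel, Function.comp_apply, hsplit,
    mul_rpow hu.le (by positivity : 0 ≤ t + u⁻¹), rpow_add hu, hexp]
  ring

theorem integrableOn_gammaPriorKernel (hβ : 0 < β) (ht : 0 < t) (hx : x ≠ 0) :
    IntegrableOn (gammaPriorKernel t x β p q) (Ioi 0) :=
  integrableOn_Ioi_of_tendsto_nhdsGT_of_isBigO_exp (by positivity)
    (continuousOn_gammaPriorKernel p q ht.le) (tendsto_gammaPriorKernel_nhdsGT_zero p q hβ)
    (gammaPriorKernel_isBigO_exp_atTop p q ht hx)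

end GammaPriorKernel

noncomputable def pinningTimeIntegrand (α β t a x r : ℝ) : ℝ :=
  r ^ (α - 1) * (r - t) ^ (-a) * √(r / (r - t)) * exp (-(r * x ^ 2) / (2 * t * (r - t)) - β * r)

theorem sq_inv_smul_pinningTimeIntegrand_const_add_inv {α β t a x u : ℝ} (ht : 0 < t)
    (hu : 0 < u) :
    (u ^ 2)⁻¹ • pinningTimeIntegrand α β t a x (t + u⁻¹) =
      exp (-(x ^ 2) / (2 * t) - β * t) * gammaPriorKernel t x β (α - 1 / 2) (a - α - 1) u := by
  have h1tu : 0 < 1 + t * u := by positivity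
  have hbase : (t + u⁻¹) ^ (α - 1) = (1 + t * u) ^ (α - 1) * u ^ (1 - α) := by
    rw [show t + u⁻¹ = (1 + t * u) * u⁻¹ by field_simp; ring,
      mul_rpow h1tu.le (inv_nonneg.2 hu.le), inv_rpow hu.le, ← rpow_neg hu.le, neg_sub]
  have hshift : u⁻¹ ^ (-a) = u ^ a := by rw [inv_rpow hu.le, ← rpow_neg hu.le, neg_neg]
  have hsqrt : √((t + u⁻¹) / u⁻¹) = (1 + t * u) ^ (1 / 2 : ℝ) := by
    rw [sqrt_eq_rpow]; congr 1; field_simp; ring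
  have hexp : exp (-((t + u⁻¹) * x ^ 2) / (2 * t * u⁻¹) - β * (t + u⁻¹)) =
      exp (-(x ^ 2) / (2 * t) - β * t) * exp (-(x ^ 2 * u) / 2 - β / u) := by
    rw [← exp_add]; congr 1; field_simp; ring
  have hsq : (u ^ 2)⁻¹ = u ^ (-2 : ℝ) := by rw [rpow_neg hu.le]; norm_cast
  rw [pinningTimeIntegrand, gammaPriorKernel, add_sub_cancel_left, hbase, hshift, hsqrt, hexp, hsq,
    show α - 1 / 2 = (α - 1) + 1 / 2 by ring, show a - α - 1 = -2 + (1 - α) + a by ring,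
    rpow_add h1tu, rpow_add hu, rpow_add hu, smul_eq_mul]
  ring

theorem gamma_prior_substitution_identity
    (α β t a x : ℝ) (hβ : 0 < β) (ht : 0 < t) (hx : x ≠ 0) :
    IntegrableOn (fun r : ℝ => r ^ (α - 1) * (r - t) ^ (-a) * Real.sqrt (r / (r - t)) *
      Real.exp (-(r * x ^ 2) / (2 * t * (r - t)) - β * r)) (Set.Ioi t) ∧
    IntegrableOn (fun u : ℝ => (1 + t * u) ^ (α - 1/2) * u ^ (a - α - 1) *
      Real.exp (-(x ^ 2 * u) / 2 - β / u)) (Set.Ioi 0) ∧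
    (∫ r in Set.Ioi t, r ^ (α - 1) * (r - t) ^ (-a) * Real.sqrt (r / (r - t)) *
        Real.exp (-(r * x ^ 2) / (2 * t * (r - t)) - β * r)) =
      Real.exp (-(x ^ 2) / (2 * t) - β * t) *
        (∫ u in Set.Ioi (0:ℝ), (1 + t * u) ^ (α - 1/2) * u ^ (a - α - 1) *
          Real.exp (-(x ^ 2 * u) / 2 - β / u)) := by
  have hsubst : EqOn (fun u => (u ^ 2)⁻¹ • pinningTimeIntegrand α β t a x (t + u⁻¹))
      (fun u => exp (-(x ^ 2) / (2 * t) - β * t) *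
        gammaPriorKernel t x β (α - 1 / 2) (a - α - 1) u) (Ioi 0) :=
    fun _ hu => sq_inv_smul_pinningTimeIntegrand_const_add_inv ht hu
  have hkernel := integrableOn_gammaPriorKernel (α - 1 / 2) (a - α - 1) hβ ht hx
  refine ⟨?_, hkernel, ?_⟩
  · exact (integrableOn_Ioi_iff_comp_const_add_inv t _).mpr
      (IntegrableOn.congr_fun (hkernel.const_mul _) hsubst.symm measurableSet_Ioi)
  · exact (integral_Ioi_eq_integral_comp_const_add_inv t (pinningTimeIntegrand α β t a x)).trans
      ((setIntegral_congr_fun measurableSet_Ioi hsubst).trans (integral_const_mul _ _))
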